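/- arXiv:1801.05450 — 6 statements merged into one kernel-verified Lean document; each statement's English description precedes it below -/
import Mathlib

section
/- Every quantum covariance matrix is strictly positive definite: if V is a real symmetric 2n×2n matrix satisfying V ≥ iΩ (as complex Hermitian matrices, where Ω is the standard symplectic form), then V > 0. -/
open Matrix
open scoped ComplexOrder

noncomputable section

/-- The standard symplectic form on `2n` modes, as a complex matrix. -/
def Omga (n : ℕ) : Matrix (Fin n ⊕ Fin n) (Fin n ⊕ Fin n) ℂ :=
  Matrix.fromBlocks 0 1 (-1) 0

/-- Embed a real matrix into the complex matrices. -/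
def toC {n : ℕ} (V : Matrix (Fin n ⊕ Fin n) (Fin n ⊕ Fin n) ℝ) :
    Matrix (Fin n ⊕ Fin n) (Fin n ⊕ Fin n) ℂ :=
  V.map (fun x => (x : ℂ))

/-- The real symplectic form. -/
def OmR (n : ℕ) : Matrix (Fin n ⊕ Fin n) (Fin n ⊕ Fin n) ℝ :=
  Matrix.fromBlocks 0 1 (-1) 0

lemma Omga_eq (n : ℕ) : Omga n = toC (OmR n) := by
  ext i j
  cases i <;> cases j <;> simp [Omga, OmR, toC, Matrix.one_apply] <;>
    split <;> simp

lemma OmR_transpose (n : ℕ) : (OmR n)ᵀ = -(OmR n) := by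
  simp [OmR, Matrix.fromBlocks_transpose, Matrix.fromBlocks_neg]

lemma OmR_mul_self (n : ℕ) : OmR n * OmR n = -1 := by
  simp [OmR, Matrix.fromBlocks_multiply]
  rw [← Matrix.fromBlocks_one, Matrix.fromBlocks_neg]
  simp

lemma vecMul_OmR {n : ℕ} (y : Fin n ⊕ Fin n → ℝ) :
    y ᵥ* OmR n = -(OmR n *ᵥ y) := by
  have h : y ᵥ* (OmR n)ᵀ = OmR n *ᵥ y := Matrix.vecMul_transpose _ _
  rw [OmR_transpose, Matrix.vecMul_neg] at h
  exact neg_eq_iff_eq_neg.mp h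

lemma OmR_skew {n : ℕ} (x y : Fin n ⊕ Fin n → ℝ) :
    y ⬝ᵥ OmR n *ᵥ x = -(x ⬝ᵥ OmR n *ᵥ y) := by
  rw [Matrix.dotProduct_mulVec, vecMul_OmR, neg_dotProduct,
    dotProduct_comm]

lemma symm_dot {n : ℕ} {V : Matrix (Fin n ⊕ Fin n) (Fin n ⊕ Fin n) ℝ}
    (hsymm : V.IsSymm) (x u : Fin n ⊕ Fin n → ℝ) :
    x ⬝ᵥ V *ᵥ u = u ⬝ᵥ V *ᵥ x := by
  nth_rewrite 1 [show V = Vᵀ from hsymm.eq.symm]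
  rw [Matrix.mulVec_transpose, dotProduct_comm, ← Matrix.dotProduct_mulVec]

lemma cast_dot {n : ℕ} (M : Matrix (Fin n ⊕ Fin n) (Fin n ⊕ Fin n) ℝ)
    (a b : Fin n ⊕ Fin n → ℝ) :
    (fun i => (a i : ℂ)) ⬝ᵥ (toC M *ᵥ fun i => (b i : ℂ)) = ((a ⬝ᵥ M *ᵥ b : ℝ) : ℂ) := by
  simp only [dotProduct, Matrix.mulVec, toC, Matrix.map_apply]
  push_cast
  ring

/-- The key inequality obtained from testing the PSD condition on `x + εi·u`. -/
lemma key_ineq {n : ℕ} {V : Matrix (Fin n ⊕ Fin n) (Fin n ⊕ Fin n) ℝ}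
    (hsymm : V.IsSymm)
    (hQCM : (toC V - Complex.I • Omga n).PosSemidef)
    (x u : Fin n ⊕ Fin n → ℝ) (ε : ℝ) :
    0 ≤ x ⬝ᵥ V *ᵥ x + ε ^ 2 * (u ⬝ᵥ V *ᵥ u) + 2 * ε * (x ⬝ᵥ OmR n *ᵥ u) := by
  set A := toC V - Complex.I • Omga n with hA
  set xC : Fin n ⊕ Fin n → ℂ := fun i => (x i : ℂ) with hxC
  set uC : Fin n ⊕ Fin n → ℂ := fun i => (u i : ℂ) with huC
  set z : Fin n ⊕ Fin n → ℂ := xC + ((ε : ℂ) * Complex.I) • uC with hz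
  have hstar : star z = xC + (-((ε : ℂ) * Complex.I)) • uC := by
    funext i
    simp [hz, hxC, huC, Pi.star_apply, Complex.conj_ofReal]
  have dotA : ∀ a b : Fin n ⊕ Fin n → ℝ,
      (fun i => (a i : ℂ)) ⬝ᵥ (A *ᵥ fun i => (b i : ℂ)) =
        ((a ⬝ᵥ V *ᵥ b : ℝ) : ℂ) - Complex.I * ((a ⬝ᵥ OmR n *ᵥ b : ℝ) : ℂ) := by
    intro a b
    rw [hA, Omga_eq, Matrix.sub_mulVec, Matrix.smul_mulVec,
      dotProduct_sub, dotProduct_smul, cast_dot, cast_dot]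
    simp [smul_eq_mul]
  have h0 := hQCM.dotProduct_mulVec_nonneg z
  have hzero : ∀ a : Fin n ⊕ Fin n → ℝ, a ⬝ᵥ OmR n *ᵥ a = 0 := by
    intro a
    have := OmR_skew a a
    linarith
  have hxu : u ⬝ᵥ OmR n *ᵥ x = -(x ⬝ᵥ OmR n *ᵥ u) := OmR_skew x u
  have hVxu : u ⬝ᵥ V *ᵥ x = x ⬝ᵥ V *ᵥ u := symm_dot hsymm u x
  have expand : star z ⬝ᵥ (A *ᵥ z) =
      ((x ⬝ᵥ V *ᵥ x + ε ^ 2 * (u ⬝ᵥ V *ᵥ u) + 2 * ε * (x ⬝ᵥ OmR n *ᵥ u) : ℝ) : ℂ) := by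
    rw [hstar]
    rw [hz, Matrix.mulVec_add, Matrix.mulVec_smul, add_dotProduct,
      smul_dotProduct, dotProduct_add, dotProduct_add,
      dotProduct_smul, dotProduct_smul]
    have e1 := dotA x x
    have e2 := dotA x u
    have e3 := dotA u x
    have e4 := dotA u u
    rw [hxC, huC] at *
    rw [e1, e2, e3, e4, hzero x, hzero u, hxu, hVxu]
    push_cast
    simp only [smul_eq_mul]
    ring_nf
    simp [Complex.I_sq]
  rw [expand] at h0
  exact Complex.zero_le_real.mp h0

/-- Every quantum covariance matrix (real symmetric `V` with `V ⪰ iΩ`) is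
positive definite. -/
theorem stmt0 (n : ℕ) (V : Matrix (Fin n ⊕ Fin n) (Fin n ⊕ Fin n) ℝ)
    (hsymm : V.IsSymm)
    (hQCM : (toC V - Complex.I • Omga n).PosSemidef) :
    V.PosDef := by
  have hpsd : ∀ x : Fin n ⊕ Fin n → ℝ, 0 ≤ x ⬝ᵥ V *ᵥ x := by
    intro x
    have := key_ineq hsymm hQCM x 0 0
    simpa using this
  refine posDef_iff_dotProduct_mulVec.mpr ⟨hsymm, ?_⟩
  intro x hx
  have hstar : star x = x := by funext i; simp
  rw [hstar]
  rcases (hpsd x).lt_or_eq with h | h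
  · exact h
  · exfalso
    set u : Fin n ⊕ Fin n → ℝ := -(OmR n *ᵥ x) with hu
    have hOu : x ⬝ᵥ OmR n *ᵥ u = x ⬝ᵥ x := by
      rw [hu, Matrix.mulVec_neg, Matrix.mulVec_mulVec, OmR_mul_self]
      simp [Matrix.neg_mulVec]
    have hs : 0 < x ⬝ᵥ x := by
      rcases (Finset.sum_nonneg (fun i _ => mul_self_nonneg (x i))).lt_or_eq with h' | h'
      · exact h'
      · exact absurd ((dotProduct_self_eq_zero).mp h'.symm) hx
    set M : ℝ := u ⬝ᵥ V *ᵥ u with hM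
    have hMnn : 0 ≤ M := hpsd u
    have hM1 : (0:ℝ) < M + 1 := by linarith
    have hkey := key_ineq hsymm hQCM x u (-(x ⬝ᵥ x) / (M + 1))
    rw [hOu, ← h, ← hM] at hkey
    have h2 : 0 ≤ (-(x ⬝ᵥ x) / (M + 1)) ^ 2 * M + 2 * (-(x ⬝ᵥ x) / (M + 1)) * (x ⬝ᵥ x) := by
      linarith
    rw [div_pow, neg_sq] at h2
    have hne : M + 1 ≠ 0 := ne_of_gt hM1
    field_simp at h2
    have hd : (0:ℝ) < (M + 1) ^ 2 * (M + 1) := by positivity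
    rw [zero_mul] at h2
    nlinarith [mul_pos (mul_pos hs hs) hM1, mul_pos hs hs, mul_pos hM1 hM1,
      mul_nonneg (mul_nonneg (mul_pos hs hs).le hM1.le) hMnn]
end
end

section
/- The smallest symplectic eigenvalue admits the dual variational expression ν_min(V) = min{ Tr(W V) : W complex Hermitian, W ⪰ 0, Tr(W · iΩ) = 1 }. -/
open Matrix
open scoped ComplexOrder

noncomputable section

/-- The standard symplectic form on `2n` modes, as a real matrix. -/
def OmgaR (n : ℕ) : Matrix (Fin n ⊕ Fin n) (Fin n ⊕ Fin n) ℝ :=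
  Matrix.fromBlocks 0 1 (-1) 0

namespace Stmt2Aux

variable {n : ℕ}

lemma toC_mul (M N : Matrix (Fin n ⊕ Fin n) (Fin n ⊕ Fin n) ℝ) :
    toC (M * N) = toC M * toC N :=
  Matrix.map_mul (f := Complex.ofRealHom)

lemma toC_transpose (M : Matrix (Fin n ⊕ Fin n) (Fin n ⊕ Fin n) ℝ) :
    toC Mᵀ = (toC M)ᵀ := by
  ext i j; simp [toC]

lemma toC_conjTranspose (M : Matrix (Fin n ⊕ Fin n) (Fin n ⊕ Fin n) ℝ) :
    (toC M)ᴴ = toC Mᵀ := by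
  ext i j; simp [toC]

lemma toC_omga : toC (OmgaR n) = Omga n := by
  ext i j
  rcases i with i | i <;> rcases j with j | j <;>
    simp [toC, OmgaR, Omga, Matrix.fromBlocks, Matrix.one_apply, apply_ite Complex.ofReal]

lemma omgaR_transpose : (OmgaR n)ᵀ = -(OmgaR n) := by
  ext i j
  rcases i with i|i <;> rcases j with j|j <;>
    simp [OmgaR, Matrix.fromBlocks, Matrix.one_apply, eq_comm]

lemma omgaR_mul_omgaR : OmgaR n * OmgaR n = -1 := by
  simp only [OmgaR, Matrix.fromBlocks_multiply]
  ext i j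
  rcases i with i | i <;> rcases j with j | j <;>
    simp [Matrix.fromBlocks, Matrix.one_apply]

lemma toC_neg (M : Matrix (Fin n ⊕ Fin n) (Fin n ⊕ Fin n) ℝ) : toC (-M) = -(toC M) := by
  ext i j; simp [toC]

lemma toC_one : toC (1 : Matrix (Fin n ⊕ Fin n) (Fin n ⊕ Fin n) ℝ) = 1 := by
  ext i j; simp [toC, Matrix.one_apply, apply_ite Complex.ofReal]

lemma omga_mul_omga : Omga n * Omga n = -1 := by
  have := congrArg toC (omgaR_mul_omgaR (n := n))
  rw [toC_mul, toC_omga, toC_neg, toC_one] at this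
  exact this

lemma omga_conjTranspose : (Omga n)ᴴ = -(Omga n) := by
  rw [← toC_omga, toC_conjTranspose, omgaR_transpose, toC_neg]

lemma iOmga_hermitian : (Complex.I • Omga n)ᴴ = Complex.I • Omga n := by
  rw [Matrix.conjTranspose_smul, omga_conjTranspose]
  simp

lemma posSemidef_real_smul {c : ℝ} (hc : 0 ≤ c)
    {M : Matrix (Fin n ⊕ Fin n) (Fin n ⊕ Fin n) ℂ} (hM : M.PosSemidef) :
    ((c : ℂ) • M).PosSemidef := by
  refine Matrix.PosSemidef.of_dotProduct_mulVec_nonneg ?_ (fun x => ?_)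
  · rw [Matrix.IsHermitian, Matrix.conjTranspose_smul, hM.1.eq, Complex.star_def,
      Complex.conj_ofReal]
  · rw [Matrix.smul_mulVec, dotProduct_smul, smul_eq_mul]
    exact mul_nonneg (by exact_mod_cast hc) (hM.dotProduct_mulVec_nonneg x)

lemma one_sub_iOmga_posSemidef : (1 - Complex.I • Omga n).PosSemidef := by
  set K := 1 - Complex.I • Omga n with hK
  have hherm : Kᴴ = K := by
    rw [hK, Matrix.conjTranspose_sub, Matrix.conjTranspose_one, iOmga_hermitian]
  have hsq : K * K = (2 : ℂ) • K := by
    rw [hK]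
    have h2 : (Complex.I • Omga n) * (Complex.I • Omga n) = 1 := by
      rw [Matrix.smul_mul, Matrix.mul_smul, omga_mul_omga, smul_smul, Complex.I_mul_I]
      simp
    simp only [sub_mul, mul_sub, Matrix.one_mul, Matrix.mul_one, h2]
    ext i j
    simp only [Matrix.sub_apply, Matrix.smul_apply, Matrix.one_apply, smul_eq_mul]
    ring
  have hKeq : K = (((1:ℝ)/2 : ℝ) : ℂ) • (Kᴴ * K) := by
    rw [hherm, hsq, smul_smul]
    norm_num
  rw [hKeq]
  exact posSemidef_real_smul (by norm_num) (Matrix.posSemidef_conjTranspose_mul_self K)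

lemma trace_nonneg_of_posSemidef {M : Matrix (Fin n ⊕ Fin n) (Fin n ⊕ Fin n) ℂ}
    (hM : M.PosSemidef) : 0 ≤ M.trace := by
  have h : ∀ i, 0 ≤ M i i := fun i => by
    have := hM.dotProduct_mulVec_nonneg (Pi.single i 1)
    simpa [Matrix.mulVec_single, dotProduct, Pi.single_apply, mul_ite, ite_mul,
      Finset.sum_ite_eq'] using this
  exact Finset.sum_nonneg fun i _ => h i

lemma trace_mul_nonneg {A B : Matrix (Fin n ⊕ Fin n) (Fin n ⊕ Fin n) ℂ}
    (hA : A.PosSemidef) (hB : B.PosSemidef) : 0 ≤ (A * B).trace := by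
  obtain ⟨C, rfl⟩ : ∃ C : Matrix (Fin n ⊕ Fin n) (Fin n ⊕ Fin n) ℂ, B = Cᴴ * C := by
    open scoped MatrixOrder in
    exact ⟨CFC.sqrt B, by rw [(CFC.sqrt_nonneg B).posSemidef.1.eq,
      CFC.sqrt_mul_sqrt_self B hB.nonneg]⟩
  rw [← Matrix.mul_assoc, Matrix.trace_mul_cycle]
  exact trace_nonneg_of_posSemidef (hA.mul_mul_conjTranspose_same C)

lemma trace_vecMulVec_mul (v w : (Fin n ⊕ Fin n) → ℂ)
    (M : Matrix (Fin n ⊕ Fin n) (Fin n ⊕ Fin n) ℂ) :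
    (Matrix.vecMulVec v w * M).trace = w ⬝ᵥ (M *ᵥ v) := by
  simp only [Matrix.trace, Matrix.diag, Matrix.mul_apply, Matrix.vecMulVec_apply,
    dotProduct, Matrix.mulVec]
  rw [Finset.sum_comm]
  refine Finset.sum_congr rfl fun k _ => ?_
  rw [Finset.mul_sum]
  refine Finset.sum_congr rfl fun i _ => ?_
  ring

lemma trace_conj3 (P W M : Matrix (Fin n ⊕ Fin n) (Fin n ⊕ Fin n) ℂ) :
    (Pᵀ * W * P * M).trace = (W * (P * M * Pᵀ)).trace := by
  rw [show Pᵀ * W * P * M = (Pᵀ * W) * (P * M) by simp only [Matrix.mul_assoc],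
    Matrix.trace_mul_comm,
    show P * M * (Pᵀ * W) = (P * M * Pᵀ) * W by simp only [Matrix.mul_assoc],
    Matrix.trace_mul_comm]

end Stmt2Aux

open Stmt2Aux

/-- Dual variational expression for the smallest symplectic eigenvalue (given
via Williamson's theorem): `ν_min(V) = min { Tr(W V) : W ⪰ 0, Tr(W·iΩ) = 1 }`. -/
theorem stmt2 (n : ℕ) (hn : 0 < n)
    (V : Matrix (Fin n ⊕ Fin n) (Fin n ⊕ Fin n) ℝ)
    (hsymm : V.IsSymm) (hpd : V.PosDef)
    (S : Matrix (Fin n ⊕ Fin n) (Fin n ⊕ Fin n) ℝ)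
    (hS : S * OmgaR n * Sᵀ = OmgaR n)
    (D : Fin n → ℝ) (hDpos : ∀ i, 0 < D i)
    (hWilliamson : S * V * Sᵀ =
      Matrix.fromBlocks (Matrix.diagonal D) 0 0 (Matrix.diagonal D)) :
    IsLeast
      {x : ℝ | ∃ W : Matrix (Fin n ⊕ Fin n) (Fin n ⊕ Fin n) ℂ,
        W.PosSemidef ∧ (W * (Complex.I • Omga n)).trace = 1 ∧
        (W * toC V).trace = (x : ℂ)}
      (⨅ i, D i) := by
  haveI : Nonempty (Fin n) := ⟨⟨0, hn⟩⟩
  obtain ⟨i₀, hi₀⟩ := Finite.exists_min D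
  have hmin : (⨅ i, D i) = D i₀ :=
    le_antisymm (ciInf_le (Set.Finite.bddBelow (Set.finite_range D)) i₀) (le_ciInf hi₀)
  set Dbl : Matrix (Fin n ⊕ Fin n) (Fin n ⊕ Fin n) ℝ :=
    Matrix.fromBlocks (Matrix.diagonal D) 0 0 (Matrix.diagonal D) with hDbl
  -- the real inverse of S
  have hSA : S * (OmgaR n * Sᵀ * (-(OmgaR n))) = 1 := by
    have h : S * (OmgaR n * Sᵀ * -(OmgaR n)) = (S * OmgaR n * Sᵀ) * -(OmgaR n) := by
      simp only [Matrix.mul_assoc]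
    rw [h, hS, Matrix.mul_neg, omgaR_mul_omgaR, neg_neg]
  set A := OmgaR n * Sᵀ * (-(OmgaR n)) with hA
  have hAS : A * S = 1 := mul_eq_one_comm.mp hSA
  have hSAt : Sᵀ * Aᵀ = 1 := by rw [← Matrix.transpose_mul, hAS, Matrix.transpose_one]
  have hAΩ : A * OmgaR n * Aᵀ = OmgaR n := by
    calc A * OmgaR n * Aᵀ = A * (S * OmgaR n * Sᵀ) * Aᵀ := by rw [hS]
    _ = (A * S) * OmgaR n * (Sᵀ * Aᵀ) := by simp only [Matrix.mul_assoc]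
    _ = OmgaR n := by rw [hAS, hSAt, Matrix.one_mul, Matrix.mul_one]
  have hV : V = A * Dbl * Aᵀ := by
    calc V = (A * S) * V * (Sᵀ * Aᵀ) := by rw [hAS, hSAt, Matrix.one_mul, Matrix.mul_one]
    _ = A * (S * V * Sᵀ) * Aᵀ := by simp only [Matrix.mul_assoc]
    _ = A * Dbl * Aᵀ := by rw [hWilliamson]
  -- complex versions
  have hDblC : toC Dbl = Matrix.diagonal (fun j => ((Sum.elim D D j : ℝ) : ℂ)) := by
    rw [hDbl, Matrix.fromBlocks_diagonal, toC, Matrix.diagonal_map (by simp)]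
  have hTΩT : toC S * Omga n * (toC S)ᵀ = Omga n := by
    have := congrArg toC hS
    rw [toC_mul, toC_mul, toC_transpose, toC_omga] at this
    exact this
  have hTVT : toC S * toC V * (toC S)ᵀ = toC Dbl := by
    have := congrArg toC hWilliamson
    rw [toC_mul, toC_mul, toC_transpose] at this
    exact this
  have hBΩB : toC A * Omga n * (toC A)ᵀ = Omga n := by
    have := congrArg toC hAΩ
    rw [toC_mul, toC_mul, toC_transpose, toC_omga] at this
    exact this
  have hBVB : toC A * toC Dbl * (toC A)ᵀ = toC V := by
    have := congrArg toC hV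
    rw [toC_mul, toC_mul, toC_transpose] at this
    exact this.symm
  constructor
  · -- membership: the optimal W
    rw [Set.mem_setOf_eq]
    set r : ℂ := ((Real.sqrt 2 : ℝ) : ℂ) with hrdef
    set c1 : ℂ := r⁻¹ with hc1
    set c2 : ℂ := -Complex.I * r⁻¹ with hc2
    set e : (Fin n ⊕ Fin n) → ℂ := Sum.elim (Pi.single i₀ c1) (Pi.single i₀ c2) with he
    set W₀ := Matrix.vecMulVec e (star e) with hW₀def
    have hr : r * r = 2 := by
      have h2 : Real.sqrt 2 * Real.sqrt 2 = 2 := Real.mul_self_sqrt (by norm_num)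
      simp only [hrdef, ← Complex.ofReal_mul, h2]; norm_num
    have hrne : r ≠ 0 := by
      intro h; rw [h, mul_zero] at hr; exact two_ne_zero hr.symm
    have hstar : star e = Sum.elim (Pi.single i₀ (star c1)) (Pi.single i₀ (star c2)) := by
      funext j; rcases j with j | j <;> simp [he, Pi.single_apply, apply_ite star]
    have hsc1 : star c1 = r⁻¹ := by
      simp [hc1, hrdef, ← Complex.ofReal_inv]
    have hsc2 : star c2 = Complex.I * r⁻¹ := by
      simp only [hc2, star_mul', star_neg, Complex.star_def, Complex.conj_I]
      rw [show (starRingEnd ℂ) r⁻¹ = r⁻¹ by simp [hrdef, ← Complex.ofReal_inv]]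
      ring
    have htr1 : (W₀ * (Complex.I • Omga n)).trace = 1 := by
      rw [hW₀def, trace_vecMulVec_mul]
      have hmv : Omga n *ᵥ e = Sum.elim (Pi.single i₀ c2) (-(Pi.single i₀ c1)) := by
        show Matrix.fromBlocks 0 1 (-1) 0 *ᵥ Sum.elim _ _ = _
        rw [Matrix.fromBlocks_mulVec]
        funext j
        rcases j with j | j <;>
          simp [Matrix.mulVec, dotProduct, Matrix.one_apply, Pi.single_apply, eq_comm,
            Matrix.neg_mulVec, Matrix.one_mulVec]
      rw [Matrix.smul_mulVec, hmv, dotProduct_smul, hstar,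
        sumElim_dotProduct_sumElim, single_dotProduct,
        single_dotProduct, hsc1, hsc2]
      simp only [Pi.single_eq_same, Pi.neg_apply, smul_eq_mul]
      have h : Complex.I * (r⁻¹ * c2 + Complex.I * r⁻¹ * (-c1)) = (2 : ℂ) * (r⁻¹ * r⁻¹) := by
        simp only [hc1, hc2]
        linear_combination (-2 * r⁻¹ * r⁻¹) * Complex.I_sq
      rw [h, ← hr]
      field_simp
    have htr2 : (W₀ * toC Dbl).trace = (D i₀ : ℂ) := by
      rw [hW₀def, trace_vecMulVec_mul, hDblC]
      have hmv : (Matrix.diagonal (fun j => ((Sum.elim D D j : ℝ) : ℂ))) *ᵥ e =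
          Sum.elim (Pi.single i₀ ((D i₀ : ℂ) * c1)) (Pi.single i₀ ((D i₀ : ℂ) * c2)) := by
        funext j
        rcases j with j | j <;> rcases eq_or_ne j i₀ with h | h <;>
          simp [Matrix.mulVec_diagonal, he, Pi.single_apply, h]
      rw [hmv, hstar, sumElim_dotProduct_sumElim, single_dotProduct,
        single_dotProduct, hsc1, hsc2]
      simp only [Pi.single_eq_same]
      have h : r⁻¹ * ((D i₀ : ℂ) * c1) + Complex.I * r⁻¹ * ((D i₀ : ℂ) * c2) =
          (D i₀ : ℂ) * ((2 : ℂ) * (r⁻¹ * r⁻¹)) := by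
        simp only [hc1, hc2]
        linear_combination (-(D i₀ : ℂ) * r⁻¹ * r⁻¹) * Complex.I_sq
      rw [h, ← hr]
      field_simp
    have hW₀psd : W₀.PosSemidef := by
      have h : W₀ = (Matrix.replicateRow Unit (star e))ᴴ * Matrix.replicateRow Unit (star e) := by
        rw [Matrix.conjTranspose_replicateRow, star_star, hW₀def, Matrix.vecMulVec_eq Unit]
      rw [h]
      exact Matrix.posSemidef_conjTranspose_mul_self _
    refine ⟨(toC S)ᵀ * W₀ * toC S, ?_, ?_, ?_⟩
    · have hTt : (toC S)ᵀ = (toC S)ᴴ := by rw [toC_conjTranspose, toC_transpose]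
      rw [hTt]
      exact hW₀psd.conjTranspose_mul_mul_same (toC S)
    · rw [trace_conj3]
      rw [show toC S * (Complex.I • Omga n) * (toC S)ᵀ = Complex.I • (toC S * Omga n * (toC S)ᵀ)
        by rw [Matrix.mul_smul, Matrix.smul_mul], hTΩT]
      exact htr1
    · rw [trace_conj3, hTVT, htr2, hmin]
  · -- lower bound
    rintro x ⟨W, hWpsd, h1, h2⟩
    rw [hmin]
    set B := toC A with hB
    have hBt : Bᵀ = Bᴴ := by rw [hB, toC_conjTranspose, toC_transpose]
    set W' := Bᵀ * W * B with hW'def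
    have hW'psd : W'.PosSemidef := by
      rw [hW'def, hBt]
      exact hWpsd.conjTranspose_mul_mul_same B
    have htr1 : (W' * (Complex.I • Omga n)).trace = 1 := by
      rw [hW'def, trace_conj3,
        show B * (Complex.I • Omga n) * Bᵀ = Complex.I • (B * Omga n * Bᵀ)
          by rw [Matrix.mul_smul, Matrix.smul_mul], hBΩB]
      exact h1
    have htr2 : (W' * toC Dbl).trace = (x : ℂ) := by
      rw [hW'def, trace_conj3, hBVB]
      exact h2
    set m := D i₀ with hm
    set P := toC Dbl - (m : ℂ) • 1 with hPdef
    have hPpsd : P.PosSemidef := by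
      have h : P = Matrix.diagonal (fun j => ((Sum.elim D D j - m : ℝ) : ℂ)) := by
        rw [hPdef, hDblC]
        ext i j
        by_cases h : i = j <;>
          simp [Matrix.diagonal_apply, Matrix.one_apply, h, Complex.ofReal_sub]
      rw [h]
      refine Matrix.PosSemidef.diagonal ?_
      intro j
      show (0:ℂ) ≤ ((Sum.elim D D j - m : ℝ) : ℂ)
      rw [Complex.zero_le_real, sub_nonneg]
      rcases j with j | j <;> exact hi₀ j
    have ht1 : (1 : ℂ) ≤ W'.trace := by
      have h0 : 0 ≤ (W' * (1 - Complex.I • Omga n)).trace :=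
        trace_mul_nonneg hW'psd one_sub_iOmga_posSemidef
      rw [Matrix.mul_sub, Matrix.mul_one, Matrix.trace_sub, htr1] at h0
      exact sub_nonneg.mp h0
    have hs : 0 ≤ (W' * P).trace := trace_mul_nonneg hW'psd hPpsd
    have heq : (x : ℂ) = (m : ℂ) * W'.trace + (W' * P).trace := by
      rw [← htr2, show toC Dbl = (m : ℂ) • 1 + P by rw [hPdef]; abel,
        Matrix.mul_add, Matrix.trace_add, Matrix.mul_smul, Matrix.mul_one,
        Matrix.trace_smul, smul_eq_mul]
    obtain ⟨ht1re, ht1im⟩ := Complex.le_def.mp ht1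
    obtain ⟨hsre, hsim⟩ := Complex.le_def.mp hs
    have hre := congrArg Complex.re heq
    simp only [Complex.ofReal_re, Complex.add_re, Complex.mul_re, Complex.ofReal_im,
      zero_mul, sub_zero] at hre
    simp only [Complex.one_re, Complex.one_im] at ht1re ht1im
    simp only [Complex.zero_re, Complex.zero_im] at hsre hsim
    have hmpos : 0 < m := hDpos i₀
    nlinarith [hre, ht1re, hsre, hmpos]
end
end

section
/- κ is continuous on the set of symmetric positive definite matrices: if V_n → V (all symmetric positive definite), then κ(V_n) → κ(V), where κ(V) = min{ t ≥ 1 : tV ∈ 𝒱 } and 𝒱 is nonempty, closed, and upward closed. -/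
open Matrix

noncomputable section

/-- The resource quantifier `κ(V) = inf { t ≥ 1 : tV ∈ 𝒱 }`. -/
def kappa {ι : Type} [Fintype ι] (𝒱 : Set (Matrix ι ι ℝ))
    (V : Matrix ι ι ℝ) : ℝ :=
  sInf {t : ℝ | 1 ≤ t ∧ t • V ∈ 𝒱}

namespace Stmt10Aux
variable {m : ℕ}

lemma herm_of_symm {A : Matrix (Fin m) (Fin m) ℝ} (h : A.IsSymm) : A.IsHermitian := by
  rw [Matrix.IsHermitian, Matrix.conjTranspose_eq_transpose_of_trivial]; exact h

lemma quad_smul (t : ℝ) (A : Matrix (Fin m) (Fin m) ℝ) (x : Fin m → ℝ) :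
    x ⬝ᵥ (t • A) *ᵥ x = t * (x ⬝ᵥ A *ᵥ x) := by
  rw [Matrix.smul_mulVec, dotProduct_smul, smul_eq_mul]

lemma quad_sub (A B : Matrix (Fin m) (Fin m) ℝ) (x : Fin m → ℝ) :
    x ⬝ᵥ (A - B) *ᵥ x = x ⬝ᵥ A *ᵥ x - x ⬝ᵥ B *ᵥ x := by
  rw [Matrix.sub_mulVec, dotProduct_sub]

lemma quad_abs_le (A : Matrix (Fin m) (Fin m) ℝ) (η : ℝ)
    (hA : ∀ i j, |A i j| ≤ η) (x : Fin m → ℝ) :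
    |x ⬝ᵥ A *ᵥ x| ≤ η * (∑ i, |x i|) ^ 2 := by
  calc |x ⬝ᵥ A *ᵥ x| ≤ ∑ i, |x i * (A *ᵥ x) i| := Finset.abs_sum_le_sum_abs _ _
    _ ≤ ∑ i, |x i| * (η * ∑ j, |x j|) := by
        apply Finset.sum_le_sum; intro i _
        rw [abs_mul]
        refine mul_le_mul_of_nonneg_left ?_ (abs_nonneg _)
        have hAx : (A *ᵥ x) i = ∑ j, A i j * x j := rfl
        rw [hAx]
        calc |∑ j, A i j * x j| ≤ ∑ j, |A i j * x j| := Finset.abs_sum_le_sum_abs _ _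
          _ ≤ ∑ j, η * |x j| := by
              apply Finset.sum_le_sum; intro j _
              rw [abs_mul]
              exact mul_le_mul_of_nonneg_right (hA i j) (abs_nonneg _)
          _ = η * ∑ j, |x j| := by rw [Finset.mul_sum]
    _ = η * (∑ i, |x i|) ^ 2 := by rw [← Finset.sum_mul]; ring

lemma posdef_lb {A : Matrix (Fin m) (Fin m) ℝ} (hA : A.PosDef) :
    ∃ c > 0, ∀ x : Fin m → ℝ, c * (∑ i, |x i|) ^ 2 ≤ x ⬝ᵥ A *ᵥ x := by
  have hquad : ∀ x : Fin m → ℝ, x ≠ 0 → 0 < x ⬝ᵥ A *ᵥ x := by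
    intro x hx
    have := hA.dotProduct_mulVec_pos hx
    simpa using this
  have hcont : Continuous fun x : Fin m → ℝ => x ⬝ᵥ A *ᵥ x := by
    simp only [dotProduct, Matrix.mulVec]
    fun_prop
  rcases Nat.eq_zero_or_pos m with hm | hm
  · refine ⟨1, one_pos, fun x => ?_⟩
    subst hm
    have hx : x = 0 := funext fun i => i.elim0
    simp [hx, dotProduct]
  · set S : Set (Fin m → ℝ) := {x | ∑ i, |x i| = 1} with hS
    have hSne : S.Nonempty := by
      refine ⟨fun i => if i = ⟨0, hm⟩ then 1 else 0, ?_⟩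
      have : ∀ j : Fin m, |if j = ⟨0, hm⟩ then (1:ℝ) else 0| = if j = ⟨0, hm⟩ then 1 else 0 := by
        intro j; split <;> simp
      simp only [hS, Set.mem_setOf_eq, this, Finset.sum_ite_eq', Finset.mem_univ, if_true]
    have hScl : IsClosed S := isClosed_eq (by continuity) continuous_const
    have hSsub : S ⊆ Metric.closedBall 0 1 := by
      intro x hx
      rw [Metric.mem_closedBall, dist_zero_right]
      rw [pi_norm_le_iff_of_nonneg zero_le_one]
      intro i
      rw [Real.norm_eq_abs]
      calc |x i| ≤ ∑ j, |x j| := Finset.single_le_sum (fun j _ => abs_nonneg (x j)) (Finset.mem_univ i)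
        _ = 1 := hx
    have hSc : IsCompact S := (isCompact_closedBall (0 : Fin m → ℝ) 1).of_isClosed_subset hScl hSsub
    obtain ⟨z, hzS, hz⟩ := hSc.exists_isMinOn hSne hcont.continuousOn
    have hzne : z ≠ 0 := by
      intro h
      rw [h] at hzS
      simp [hS] at hzS
    refine ⟨z ⬝ᵥ A *ᵥ z, hquad z hzne, fun x => ?_⟩
    by_cases hx : x = 0
    · simp [hx]
    · set r := ∑ i, |x i| with hr
      have hrpos : 0 < r := by
        obtain ⟨i, hi⟩ := Function.ne_iff.mp hx
        exact Finset.sum_pos' (fun j _ => abs_nonneg _) ⟨i, Finset.mem_univ i, abs_pos.mpr hi⟩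
      have hyS : (r⁻¹ • x) ∈ S := by
        simp only [hS, Set.mem_setOf_eq, Pi.smul_apply, smul_eq_mul, abs_mul,
          abs_of_pos (inv_pos.mpr hrpos), ← Finset.mul_sum, ← hr]
        exact inv_mul_cancel₀ hrpos.ne'
      have hmin := hz hyS
      have hcalc : (r⁻¹ • x) ⬝ᵥ A *ᵥ (r⁻¹ • x) = r⁻¹ * (r⁻¹ * (x ⬝ᵥ A *ᵥ x)) := by
        rw [Matrix.mulVec_smul, dotProduct_smul, smul_dotProduct]
        simp [mul_comm]
      have hle : z ⬝ᵥ A *ᵥ z ≤ r⁻¹ * (r⁻¹ * (x ⬝ᵥ A *ᵥ x)) := by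
        rw [← hcalc]; exact hmin
      calc (z ⬝ᵥ A *ᵥ z) * r ^ 2 = (z ⬝ᵥ A *ᵥ z) * (r * r) := by ring
        _ ≤ r⁻¹ * (r⁻¹ * (x ⬝ᵥ A *ᵥ x)) * (r * r) :=
            mul_le_mul_of_nonneg_right hle (le_of_lt (mul_pos hrpos hrpos))
        _ = x ⬝ᵥ A *ᵥ x := by field_simp

/-- perturbation: if `B` is symmetric, `A` has quadratic lower bound `c` and `B - A`
has entries bounded by `c`, then `B` is PSD. -/
lemma psd_of_close {B A : Matrix (Fin m) (Fin m) ℝ} {c : ℝ}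
    (hBsymm : B.IsSymm)
    (hlb : ∀ x : Fin m → ℝ, c * (∑ i, |x i|) ^ 2 ≤ x ⬝ᵥ A *ᵥ x)
    (hE : ∀ i j, |B i j - A i j| ≤ c) : B.PosSemidef := by
  refine Matrix.PosSemidef.of_dotProduct_mulVec_nonneg (herm_of_symm hBsymm) fun x => ?_
  have hx : star x = x := by simp
  rw [hx]
  have hB : x ⬝ᵥ B *ᵥ x = x ⬝ᵥ A *ᵥ x + x ⬝ᵥ (B - A) *ᵥ x := by
    rw [quad_sub]; ring
  have h1 := hlb x
  have h2 := quad_abs_le (B - A) c (by intro i j; simpa [Matrix.sub_apply] using hE i j) x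
  rw [hB]
  have := abs_le.mp h2
  linarith [this.1]

/-- the scaling set is nonempty for symmetric PD matrices. -/
lemma scale_nonempty (𝒱 : Set (Matrix (Fin m) (Fin m) ℝ)) (hne : 𝒱.Nonempty)
    (hmem : ∀ V ∈ 𝒱, V.IsSymm ∧ V.PosDef)
    (hup : ∀ V ∈ 𝒱, ∀ W : Matrix (Fin m) (Fin m) ℝ,
      W.IsSymm → (W - V).PosSemidef → W ∈ 𝒱)
    (V : Matrix (Fin m) (Fin m) ℝ) (hVsymm : V.IsSymm) (hVpd : V.PosDef) :
    {t : ℝ | 1 ≤ t ∧ t • V ∈ 𝒱}.Nonempty := by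
  obtain ⟨W₀, hW₀⟩ := hne
  obtain ⟨c, hc, hlb⟩ := posdef_lb hVpd
  set η : ℝ := ∑ i, ∑ j, |W₀ i j| with hη
  have hηb : ∀ i j, |W₀ i j| ≤ η := by
    intro i j
    calc |W₀ i j| ≤ ∑ j', |W₀ i j'| :=
          Finset.single_le_sum (f := fun j' => |W₀ i j'|)
            (fun j' _ => abs_nonneg _) (Finset.mem_univ j)
      _ ≤ ∑ i', ∑ j', |W₀ i' j'| :=
          Finset.single_le_sum (f := fun i' => ∑ j', |W₀ i' j'|)
            (fun i' _ => Finset.sum_nonneg fun j' _ => abs_nonneg _) (Finset.mem_univ i)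
  have hηnn : 0 ≤ η := Finset.sum_nonneg fun i _ => Finset.sum_nonneg fun j _ => abs_nonneg _
  set t : ℝ := 1 + η / c with ht
  have ht1 : (1:ℝ) ≤ t := by
    have : 0 ≤ η / c := div_nonneg hηnn hc.le
    rw [ht]; linarith
  refine ⟨t, ht1, ?_⟩
  refine hup W₀ hW₀ (t • V) (hVsymm.smul t) ?_
  refine Matrix.PosSemidef.of_dotProduct_mulVec_nonneg (herm_of_symm (((hVsymm.smul t)).sub (hmem W₀ hW₀).1)) fun x => ?_
  have hx : star x = x := by simp
  rw [hx, quad_sub, quad_smul]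
  have h1 := hlb x
  have h2 := (abs_le.mp (quad_abs_le W₀ η hηb x)).2
  have htc : t * c = c + η := by
    rw [ht]; field_simp
  have h4 : t * (c * (∑ i, |x i|) ^ 2) ≤ t * (x ⬝ᵥ V *ᵥ x) :=
    mul_le_mul_of_nonneg_left h1 (le_trans zero_le_one ht1)
  have h5 : t * (c * (∑ i, |x i|) ^ 2) = c * (∑ i, |x i|) ^ 2 + η * (∑ i, |x i|) ^ 2 := by
    rw [← mul_assoc, htc]; ring
  have h6 : 0 ≤ c * (∑ i, |x i|) ^ 2 := mul_nonneg hc.le (sq_nonneg _)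
  linarith

end Stmt10Aux

open Stmt10Aux

/-- Continuity of `κ` on symmetric positive definite matrices: if `Vₙ → V`
(all symmetric positive definite), then `κ(Vₙ) → κ(V)`. -/
theorem stmt10 (m : ℕ) (𝒱 : Set (Matrix (Fin m) (Fin m) ℝ))
    (hne : 𝒱.Nonempty) (hcl : IsClosed 𝒱)
    (hmem : ∀ V ∈ 𝒱, V.IsSymm ∧ V.PosDef)
    (hup : ∀ V ∈ 𝒱, ∀ W : Matrix (Fin m) (Fin m) ℝ,
      W.IsSymm → (W - V).PosSemidef → W ∈ 𝒱)
    (Vseq : ℕ → Matrix (Fin m) (Fin m) ℝ)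
    (hseqsymm : ∀ k, (Vseq k).IsSymm) (hseqpd : ∀ k, (Vseq k).PosDef)
    (V : Matrix (Fin m) (Fin m) ℝ) (hVsymm : V.IsSymm) (hVpd : V.PosDef)
    (hlim : Filter.Tendsto Vseq Filter.atTop (nhds V)) :
    Filter.Tendsto (fun k => kappa 𝒱 (Vseq k)) Filter.atTop (nhds (kappa 𝒱 V)) := by
  classical
  obtain ⟨c, hc, hlb⟩ := posdef_lb hVpd
  have hbddV : BddBelow {t : ℝ | 1 ≤ t ∧ t • V ∈ 𝒱} := ⟨1, fun t ht => ht.1⟩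
  have hSVne := scale_nonempty 𝒱 hne hmem hup V hVsymm hVpd
  have hSVclosed : IsClosed {t : ℝ | 1 ≤ t ∧ t • V ∈ 𝒱} := by
    have heq : {t : ℝ | 1 ≤ t ∧ t • V ∈ 𝒱} = Set.Ici 1 ∩ (fun t : ℝ => t • V) ⁻¹' 𝒱 := rfl
    rw [heq]
    exact isClosed_Ici.inter (hcl.preimage (continuous_id.smul continuous_const))
  have ht₀mem : kappa 𝒱 V ∈ {t : ℝ | 1 ≤ t ∧ t • V ∈ 𝒱} :=
    hSVclosed.csInf_mem hSVne hbddV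
  set t₀ := kappa 𝒱 V with ht₀def
  obtain ⟨ht₀1, ht₀V⟩ := ht₀mem
  have hentry : ∀ i j, Filter.Tendsto (fun k => Vseq k i j) Filter.atTop (nhds (V i j)) := by
    intro i j
    exact (tendsto_pi_nhds.mp (tendsto_pi_nhds.mp hlim i)) j
  rw [Metric.tendsto_atTop]
  intro ε hε
  set δ : ℝ := ε / (2 * (t₀ + 1)) with hδdef
  have hδpos : 0 < δ := by
    apply div_pos hε
    linarith
  set η : ℝ := min (δ * c) (ε / 2 * c / (t₀ + ε / 2)) with hηdef
  have hηpos : 0 < η := by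
    apply lt_min (mul_pos hδpos hc)
    apply div_pos (mul_pos (by linarith) hc)
    linarith
  have hev : ∀ᶠ k in Filter.atTop, ∀ i j, |Vseq k i j - V i j| ≤ η := by
    rw [Filter.eventually_all]
    intro i
    rw [Filter.eventually_all]
    intro j
    obtain ⟨N, hN⟩ := Metric.tendsto_atTop.mp (hentry i j) η hηpos
    rw [Filter.eventually_atTop]
    refine ⟨N, fun k hk => ?_⟩
    have := hN k hk
    rw [Real.dist_eq] at this
    linarith
  obtain ⟨N, hN⟩ := Filter.eventually_atTop.mp hev
  refine ⟨N, fun k hk => ?_⟩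
  have hclose := hN k hk
  have hbddk : BddBelow {t : ℝ | 1 ≤ t ∧ t • Vseq k ∈ 𝒱} := ⟨1, fun t ht => ht.1⟩
  have hSkne := scale_nonempty 𝒱 hne hmem hup (Vseq k) (hseqsymm k) (hseqpd k)
  -- upper bound
  have hupper : kappa 𝒱 (Vseq k) ≤ t₀ + ε / 2 := by
    apply csInf_le hbddk
    refine ⟨by linarith, ?_⟩
    refine hup (t₀ • V) ht₀V _ ((hseqsymm k).smul _) ?_
    apply psd_of_close (A := (ε / 2) • V) (c := ε / 2 * c)
    · exact ((hseqsymm k).smul _).sub (hVsymm.smul _)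
    · intro x
      rw [quad_smul]
      have := mul_le_mul_of_nonneg_left (hlb x) (by linarith : (0:ℝ) ≤ ε / 2)
      calc ε / 2 * c * (∑ i, |x i|) ^ 2 = ε / 2 * (c * (∑ i, |x i|) ^ 2) := by ring
        _ ≤ ε / 2 * (x ⬝ᵥ V *ᵥ x) := this
    · intro i j
      have hij : ((t₀ + ε / 2) • Vseq k - t₀ • V) i j - ((ε / 2) • V) i j
          = (t₀ + ε / 2) * (Vseq k i j - V i j) := by
        simp only [Matrix.sub_apply, Matrix.smul_apply, smul_eq_mul]
        ring
      rw [hij, abs_mul, abs_of_pos (by linarith : (0:ℝ) < t₀ + ε / 2)]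
      have h1 : |Vseq k i j - V i j| ≤ η := hclose i j
      have h2 : η ≤ ε / 2 * c / (t₀ + ε / 2) := min_le_right _ _
      calc (t₀ + ε / 2) * |Vseq k i j - V i j| ≤ (t₀ + ε / 2) * (ε / 2 * c / (t₀ + ε / 2)) := by
            apply mul_le_mul_of_nonneg_left (h1.trans h2) (by linarith)
        _ = ε / 2 * c := by field_simp
  -- lower bound
  have hlower : t₀ / (1 + δ) ≤ kappa 𝒱 (Vseq k) := by
    apply le_csInf hSkne
    rintro t ⟨ht1, htk⟩
    have hMpsd : ((1 + δ) • V - Vseq k).PosSemidef := by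
      apply psd_of_close (A := δ • V) (c := δ * c)
      · exact (hVsymm.smul _).sub (hseqsymm k)
      · intro x
        rw [quad_smul]
        have := mul_le_mul_of_nonneg_left (hlb x) hδpos.le
        calc δ * c * (∑ i, |x i|) ^ 2 = δ * (c * (∑ i, |x i|) ^ 2) := by ring
          _ ≤ δ * (x ⬝ᵥ V *ᵥ x) := this
      · intro i j
        have hij : ((1 + δ) • V - Vseq k) i j - (δ • V) i j = V i j - Vseq k i j := by
          simp only [Matrix.sub_apply, Matrix.smul_apply, smul_eq_mul]
          ring
        rw [hij, abs_sub_comm]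
        exact (hclose i j).trans (min_le_left _ _)
    have hmemV : ((1 + δ) * t) • V ∈ 𝒱 := by
      refine hup (t • Vseq k) htk _ (hVsymm.smul _) ?_
      have heq : ((1 + δ) * t) • V - t • Vseq k = t • ((1 + δ) • V - Vseq k) := by
        rw [smul_sub, smul_smul, mul_comm]
      rw [heq]
      refine Matrix.PosSemidef.of_dotProduct_mulVec_nonneg (herm_of_symm (((hVsymm.smul _).sub (hseqsymm k)).smul t)) fun x => ?_
      have hx : star x = x := by simp
      rw [hx, quad_smul]
      have h0 := hMpsd.dotProduct_mulVec_nonneg x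
      rw [star_trivial] at h0
      exact mul_nonneg (by linarith) h0
    have hle : t₀ ≤ (1 + δ) * t := csInf_le hbddV ⟨by nlinarith, hmemV⟩
    rw [div_le_iff₀ (by linarith : (0:ℝ) < 1 + δ)]
    linarith [hle]
  have hlow2 : t₀ - ε / 2 ≤ kappa 𝒱 (Vseq k) := by
    have h7 : t₀ - t₀ / (1 + δ) = t₀ * δ / (1 + δ) := by
      field_simp
      ring
    have h8 : t₀ * δ / (1 + δ) ≤ t₀ * δ :=
      div_le_self (mul_nonneg (by linarith) hδpos.le) (by linarith)
    have h9 : t₀ * δ ≤ ε / 2 := by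
      rw [hδdef, ← mul_div_assoc,
        div_le_div_iff₀ (by linarith : (0:ℝ) < 2 * (t₀ + 1)) (by norm_num : (0:ℝ) < 2)]
      nlinarith
    linarith
  rw [Real.dist_eq, abs_lt]
  constructor <;> linarith
end
end

section
/- Tensorization of κ: suppose families of free sets 𝒱_A ⊆ Sym⁺(2N), 𝒱_B ⊆ Sym⁺(2M), 𝒱_{AB} ⊆ Sym⁺(2(N+M)) satisfy (i) V ∈ 𝒱_A, W ∈ 𝒱_B implies V ⊕ W ∈ 𝒱_{AB}, and (ii) if U ∈ 𝒱_{AB} then its principal 2N×2N diagonal block lies in 𝒱_A and its 2M×2M block lies in 𝒱_B; each set nonempty, closed, upward closed. Then κ_{AB}(V ⊕ W) = max{ κ_A(V), κ_B(W) } for all symmetric positive definite V, W. -/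
open Matrix

noncomputable section

/-- A "free set" of covariance matrices: nonempty, topologically closed,
consisting of symmetric positive definite matrices, and upward closed in the
Loewner order. -/
def FreeSet {ι : Type} [Fintype ι] (𝒱 : Set (Matrix ι ι ℝ)) : Prop :=
  𝒱.Nonempty ∧ IsClosed 𝒱 ∧ (∀ V ∈ 𝒱, V.IsSymm ∧ V.PosDef) ∧
    (∀ V ∈ 𝒱, ∀ W : Matrix ι ι ℝ, W.IsSymm → (W - V).PosSemidef → W ∈ 𝒱)

/-- A nonnegative scalar multiple of a positive semidefinite matrix is PSD. -/
lemma posSemidef_smul_aux {n : Type} [Fintype n] {c : ℝ} (hc : 0 ≤ c) {M : Matrix n n ℝ}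
    (hM : M.PosSemidef) : (c • M).PosSemidef := by
  constructor
  · unfold Matrix.IsHermitian
    rw [conjTranspose_smul, hM.1]
    norm_num
  · intro x
    exact (hM.smul hc).2 x

/-- For a real symmetric matrix `B`, `t • 1 - B` is PSD for large enough `t`. -/
lemma exists_smul_one_sub_psd_aux {n : Type} [Fintype n] [DecidableEq n] (B : Matrix n n ℝ)
    (hB : B.IsHermitian) :
    ∃ t : ℝ, 1 ≤ t ∧ ((t • (1 : Matrix n n ℝ)) - B).PosSemidef := by
  set U : Matrix n n ℝ := (hB.eigenvectorUnitary : Matrix n n ℝ)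
  set t : ℝ := 1 + ∑ i, |hB.eigenvalues i|
  have ht : 1 ≤ t := le_add_of_nonneg_right (Finset.sum_nonneg fun i _ => abs_nonneg _)
  refine ⟨t, ht, ?_⟩
  have hU : U * star U = 1 := mem_unitaryGroup_iff.mp hB.eigenvectorUnitary.2
  have key : t • (1 : Matrix n n ℝ) - B
      = U * diagonal (fun i => t - hB.eigenvalues i) * star U := by
    have hdiag : diagonal (fun i => t - hB.eigenvalues i)
        = t • (1 : Matrix n n ℝ) - diagonal (RCLike.ofReal ∘ hB.eigenvalues) := by
      ext i j
      by_cases h : i = j <;> simp [h, Matrix.one_apply, diagonal]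
    rw [hdiag, Matrix.mul_sub, Matrix.sub_mul]
    rw [mul_smul_comm, smul_mul_assoc, mul_one, hU]
    conv_lhs => rw [hB.spectral_theorem, Unitary.conjStarAlgAut_apply]
  rw [key]
  have hd : (diagonal fun i => t - hB.eigenvalues i).PosSemidef :=
    posSemidef_diagonal_iff.mpr fun i => by
      have h1 := le_abs_self (hB.eigenvalues i)
      have h2 := Finset.single_le_sum (f := fun j => |hB.eigenvalues j|)
        (fun j _ => abs_nonneg _) (Finset.mem_univ i)
      simp only [t]; linarith
  have hres := hd.mul_mul_conjTranspose_same U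
  rwa [← star_eq_conjTranspose] at hres

/-- For `V` positive definite and `V₀` Hermitian, `t • V - V₀` is PSD for large `t ≥ 1`. -/
lemma exists_smul_sub_psd_aux {n : Type} [Fintype n] [DecidableEq n] (V V₀ : Matrix n n ℝ)
    (hV : V.PosDef) (hV₀ : V₀.IsHermitian) :
    ∃ t : ℝ, 1 ≤ t ∧ (t • V - V₀).PosSemidef := by
  have hVs := hV.posSemidef
  open scoped MatrixOrder in set S := CFC.sqrt V with hSdef
  have hSS : S * S = V := by open scoped MatrixOrder in exact CFC.sqrt_mul_sqrt_self V hVs.nonneg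
  have hSh : S.IsHermitian := by open scoped MatrixOrder in exact (CFC.sqrt_nonneg V).posSemidef.1
  have hdet : IsUnit S.det := by
    have hdV : V.det ≠ 0 := hV.det_pos.ne'
    have hmul : S.det * S.det = V.det := by rw [← det_mul, hSS]
    exact isUnit_iff_ne_zero.mpr (fun h => hdV (by rw [← hmul, h, zero_mul]))
  have hSinv : S * S⁻¹ = 1 := mul_nonsing_inv S hdet
  have hSinv' : S⁻¹ * S = 1 := nonsing_inv_mul S hdet
  have hSinvh : S⁻¹ᴴ = S⁻¹ := by rw [conjTranspose_nonsing_inv, hSh.eq]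
  set B := S⁻¹ * V₀ * S⁻¹ with hBdef
  have hBh : B.IsHermitian := by
    show Bᴴ = B
    rw [hBdef, conjTranspose_mul, conjTranspose_mul, hSinvh, hV₀.eq, Matrix.mul_assoc]
  obtain ⟨t, ht1, htB⟩ := exists_smul_one_sub_psd_aux B hBh
  refine ⟨t, ht1, ?_⟩
  have hres := htB.mul_mul_conjTranspose_same S
  have hEq : S * ((t • (1 : Matrix n n ℝ)) - B) * Sᴴ = t • V - V₀ := by
    rw [hSh.eq, Matrix.mul_sub, Matrix.sub_mul, mul_smul_comm, smul_mul_assoc, mul_one, hSS]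
    congr 1
    calc S * B * S = S * S⁻¹ * V₀ * S⁻¹ * S := by
          rw [hBdef]; simp only [← Matrix.mul_assoc]
      _ = V₀ := by rw [hSinv, one_mul, Matrix.mul_assoc, hSinv', mul_one]
  rwa [hEq] at hres

/-- For a free set `𝒱` and a symmetric positive definite `V`, the feasible set of
`kappa 𝒱 V` is the closed ray `[kappa 𝒱 V, ∞)`. -/
lemma freeSet_feasible_eq_Ici {n : Type} [Fintype n] [DecidableEq n]
    (𝒱 : Set (Matrix n n ℝ)) (h : FreeSet 𝒱) (V : Matrix n n ℝ)
    (hVs : V.IsSymm) (hVpd : V.PosDef) :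
    {t : ℝ | 1 ≤ t ∧ t • V ∈ 𝒱} = Set.Ici (kappa 𝒱 V) := by
  set s := {t : ℝ | 1 ≤ t ∧ t • V ∈ 𝒱} with hsdef
  have hk : kappa 𝒱 V = sInf s := rfl
  have hbdd : BddBelow s := ⟨1, fun t ht => ht.1⟩
  have hne : s.Nonempty := by
    obtain ⟨V₀, hV₀⟩ := h.1
    have hV₀h : V₀.IsHermitian := ((h.2.2.1 V₀ hV₀).2).1
    obtain ⟨t, ht1, hpsd⟩ := exists_smul_sub_psd_aux V V₀ hVpd hV₀h
    exact ⟨t, ht1, h.2.2.2 V₀ hV₀ (t • V) (hVs.smul t) hpsd⟩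
  have hclosed : IsClosed s := by
    have heq : s = Set.Ici 1 ∩ (fun t : ℝ => t • V) ⁻¹' 𝒱 := rfl
    rw [heq]
    exact isClosed_Ici.inter (h.2.1.preimage (by continuity))
  have hmem : sInf s ∈ s := hclosed.csInf_mem hne hbdd
  ext t
  simp only [hk, Set.mem_Ici]
  constructor
  · exact fun ht => csInf_le hbdd ht
  · intro ht
    refine ⟨le_trans hmem.1 ht, ?_⟩
    refine h.2.2.2 (sInf s • V) hmem.2 (t • V) (hVs.smul t) ?_
    rw [show t • V - sInf s • V = (t - sInf s) • V from (sub_smul t (sInf s) V).symm]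
    exact posSemidef_smul_aux (sub_nonneg.mpr ht) hVpd.posSemidef

/-- Tensorization of `κ`: under closure of the free sets under direct sums and
under taking principal diagonal blocks, `κ_{AB}(V ⊕ W) = max(κ_A(V), κ_B(W))`. -/
theorem stmt11 (a b : ℕ)
    (𝒱A : Set (Matrix (Fin a) (Fin a) ℝ))
    (𝒱B : Set (Matrix (Fin b) (Fin b) ℝ))
    (𝒱AB : Set (Matrix (Fin a ⊕ Fin b) (Fin a ⊕ Fin b) ℝ))
    (hA : FreeSet 𝒱A) (hB : FreeSet 𝒱B) (hAB : FreeSet 𝒱AB)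
    (hsum : ∀ V ∈ 𝒱A, ∀ W ∈ 𝒱B, Matrix.fromBlocks V 0 0 W ∈ 𝒱AB)
    (hblocks : ∀ U ∈ 𝒱AB, U.toBlocks₁₁ ∈ 𝒱A ∧ U.toBlocks₂₂ ∈ 𝒱B)
    (V : Matrix (Fin a) (Fin a) ℝ) (hVsymm : V.IsSymm) (hVpd : V.PosDef)
    (W : Matrix (Fin b) (Fin b) ℝ) (hWsymm : W.IsSymm) (hWpd : W.PosDef) :
    kappa 𝒱AB (Matrix.fromBlocks V 0 0 W) = max (kappa 𝒱A V) (kappa 𝒱B W) := by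
  have hDA := freeSet_feasible_eq_Ici 𝒱A hA V hVsymm hVpd
  have hDB := freeSet_feasible_eq_Ici 𝒱B hB W hWsymm hWpd
  have hset : {t : ℝ | 1 ≤ t ∧ t • Matrix.fromBlocks V 0 0 W ∈ 𝒱AB}
      = {t : ℝ | 1 ≤ t ∧ t • V ∈ 𝒱A} ∩ {t : ℝ | 1 ≤ t ∧ t • W ∈ 𝒱B} := by
    ext t
    simp only [Set.mem_setOf_eq, Set.mem_inter_iff]
    constructor
    · rintro ⟨ht1, htV⟩
      simp only [fromBlocks_smul, smul_zero] at htV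
      have hb := hblocks _ htV
      rw [toBlocks_fromBlocks₁₁, toBlocks_fromBlocks₂₂] at hb
      exact ⟨⟨ht1, hb.1⟩, ⟨ht1, hb.2⟩⟩
    · rintro ⟨⟨ht1, hV'⟩, ⟨_, hW'⟩⟩
      refine ⟨ht1, ?_⟩
      simp only [fromBlocks_smul, smul_zero]
      exact hsum _ hV' _ hW'
  have hk : kappa 𝒱AB (Matrix.fromBlocks V 0 0 W)
      = sInf {t : ℝ | 1 ≤ t ∧ t • Matrix.fromBlocks V 0 0 W ∈ 𝒱AB} := rfl
  rw [hk, hset, hDA, hDB, Set.Ici_inter_Ici, csInf_Ici]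
end
end

section
/- Monotonicity of the Schur complement: if 0 < M ≤ M' are Hermitian block matrices with invertible upper-left blocks P, P', then M/P ≤ M'/P', where M/P = Q - Y P⁻¹ X for M = [[P, X],[Y, Q]]. -/
open Matrix
open scoped ComplexOrder

noncomputable section

/-- The Schur complement of a block matrix `M = [[P, X],[Y, Q]]` with respect
to its upper-left block `P`: `M/P = Q - Y P⁻¹ X`. -/
def schurC {k m : ℕ} (M : Matrix (Fin k ⊕ Fin m) (Fin k ⊕ Fin m) ℂ) :
    Matrix (Fin m) (Fin m) ℂ :=
  M.toBlocks₂₂ - M.toBlocks₂₁ * (M.toBlocks₁₁)⁻¹ * M.toBlocks₁₂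

lemma toBlocks₂₁_eq {k m : ℕ} {M : Matrix (Fin k ⊕ Fin m) (Fin k ⊕ Fin m) ℂ}
    (h : M.IsHermitian) : M.toBlocks₂₁ = M.toBlocks₁₂ᴴ := by
  ext i j
  simpa [toBlocks₂₁, toBlocks₁₂, conjTranspose_apply] using (h.apply (Sum.inr i) (Sum.inl j)).symm

lemma posDef_toBlocks₁₁ {k m : ℕ} {M : Matrix (Fin k ⊕ Fin m) (Fin k ⊕ Fin m) ℂ}
    (h : M.PosDef) : M.toBlocks₁₁.PosDef := by
  refine posDef_iff_dotProduct_mulVec.mpr ⟨?_, ?_⟩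
  · ext i j
    simpa [toBlocks₁₁, conjTranspose_apply] using congrFun (congrFun h.1 (Sum.inl i)) (Sum.inl j)
  · intro x hx
    have hy : (Sum.elim x (0 : Fin m → ℂ)) ≠ 0 := by
      intro hcon
      exact hx (by ext i; exact congrFun hcon (Sum.inl i))
    have := h.dotProduct_mulVec_pos hy
    convert this using 1
    simp [dotProduct, mulVec, Fintype.sum_sum_type, toBlocks₁₁]

/-- Monotonicity of the Schur complement: if `0 < M ≤ M'` are Hermitian block
matrices with invertible upper-left blocks, then `M/P ≤ M'/P'`. -/
theorem stmt12 (k m : ℕ)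
    (M M' : Matrix (Fin k ⊕ Fin m) (Fin k ⊕ Fin m) ℂ)
    (hM : M.PosDef) (hM' : M'.IsHermitian)
    (hle : (M' - M).PosSemidef)
    (hP : IsUnit M.toBlocks₁₁.det) (hP' : IsUnit M'.toBlocks₁₁.det) :
    (schurC M' - schurC M).PosSemidef := by
  have hM'pd : M'.PosDef := by
    have := hM.add_posSemidef hle
    simpa using this
  have hPpd := posDef_toBlocks₁₁ hM
  have hP'pd := posDef_toBlocks₁₁ hM'pd
  haveI : Invertible M.toBlocks₁₁ := M.toBlocks₁₁.invertibleOfIsUnitDet hP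
  haveI : Invertible M'.toBlocks₁₁ := M'.toBlocks₁₁.invertibleOfIsUnitDet hP'
  have h21 := toBlocks₂₁_eq hM.1
  have h21' := toBlocks₂₁_eq hM'
  -- Step 1 : M - [[0,0],[0, schurC M]] is PSD
  have key1 : (M - fromBlocks 0 0 0 (schurC M)).PosSemidef := by
    have hMeq : M - fromBlocks 0 0 0 (schurC M)
        = fromBlocks M.toBlocks₁₁ M.toBlocks₁₂ M.toBlocks₁₂ᴴ
            (M.toBlocks₂₂ - schurC M) := by
      rw [← h21]
      ext (i|i) (j|j) <;>
        simp [fromBlocks, toBlocks₁₁, toBlocks₁₂, toBlocks₂₁, toBlocks₂₂, Matrix.sub_apply]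
    rw [hMeq, PosDef.fromBlocks₁₁ _ _ hPpd]
    have : M.toBlocks₂₂ - schurC M - M.toBlocks₁₂ᴴ * M.toBlocks₁₁⁻¹ * M.toBlocks₁₂ = 0 := by
      rw [schurC, h21]; abel
    rw [this]
    exact PosSemidef.zero
  -- Step 2 : M' - [[0,0],[0, schurC M]] is PSD
  have key2 : (M' - fromBlocks 0 0 0 (schurC M)).PosSemidef := by
    have := hle.add key1
    have heq : M' - M + (M - fromBlocks 0 0 0 (schurC M))
        = M' - fromBlocks 0 0 0 (schurC M) := by abel
    rwa [heq] at this
  -- Step 3 : conclude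
  have hMeq' : M' - fromBlocks 0 0 0 (schurC M)
      = fromBlocks M'.toBlocks₁₁ M'.toBlocks₁₂ M'.toBlocks₁₂ᴴ
          (M'.toBlocks₂₂ - schurC M) := by
    rw [← h21']
    ext (i|i) (j|j) <;>
      simp [fromBlocks, toBlocks₁₁, toBlocks₁₂, toBlocks₂₁, toBlocks₂₂, Matrix.sub_apply]
  rw [hMeq', PosDef.fromBlocks₁₁ _ _ hP'pd] at key2
  have : schurC M' - schurC M
      = M'.toBlocks₂₂ - schurC M - M'.toBlocks₁₂ᴴ * M'.toBlocks₁₁⁻¹ * M'.toBlocks₁₂ := by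
    rw [schurC, h21']; abel
  rwa [this]
end
end

section
/- Monotonicity of κ under Gaussian channels: let 𝒱_A, 𝒱_B be nonempty, closed, upward-closed sets of symmetric positive definite matrices, and let Γ_{AB} ⪰ 0 be a Hermitian block matrix such that the map V ↦ (Γ_{AB} + ΣVΣ)/(Γ_A + ΣVΣ) sends 𝒱_A into 𝒱_B (where Σ = diag(I,-I), Γ_A the A-block of Γ_{AB}, and / the Schur complement, assuming Γ_A + ΣVΣ invertible). Then κ_B((Γ_{AB} + ΣVΣ)/(Γ_A + ΣVΣ)) ≤ κ_A(V) for every symmetric positive definite V. -/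
open Matrix

noncomputable section

/-- The Schur complement of a block matrix with respect to its upper-left block. -/
def schurR {α β : Type} [Fintype α] [Fintype β] [DecidableEq α]
    (M : Matrix (α ⊕ β) (α ⊕ β) ℝ) : Matrix β β ℝ :=
  M.toBlocks₂₂ - M.toBlocks₂₁ * (M.toBlocks₁₁)⁻¹ * M.toBlocks₁₂

/-- The matrix `Σ = diag(I, -I)` reversing the signs of the momenta. -/
def SgM (n : ℕ) : Matrix (Fin n ⊕ Fin n) (Fin n ⊕ Fin n) ℝ :=
  Matrix.fromBlocks 1 0 0 (-1)

/-- The action of a Gaussian channel with Choi covariance matrix `Γ` on a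
covariance matrix `V`: `V ↦ (Γ + ΣVΣ)/(Γ_A + ΣVΣ)`. -/
def chan (nA nB : ℕ)
    (Γ : Matrix ((Fin nA ⊕ Fin nA) ⊕ (Fin nB ⊕ Fin nB))
      ((Fin nA ⊕ Fin nA) ⊕ (Fin nB ⊕ Fin nB)) ℝ)
    (V : Matrix (Fin nA ⊕ Fin nA) (Fin nA ⊕ Fin nA) ℝ) :
    Matrix (Fin nB ⊕ Fin nB) (Fin nB ⊕ Fin nB) ℝ :=
  schurR (Γ + Matrix.fromBlocks (SgM nA * V * SgM nA) 0 0 0)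


section Helpers

open scoped Matrix
open scoped MatrixOrder

lemma isHermitian_iff_isSymm' {ι : Type} [Fintype ι] (M : Matrix ι ι ℝ) :
    M.IsHermitian ↔ M.IsSymm := by
  have e : Mᴴ = Mᵀ := by ext i j; simp [conjTranspose_apply]
  unfold Matrix.IsHermitian Matrix.IsSymm
  rw [e]

lemma PosSemidef.smul' {ι : Type} [Fintype ι] {M : Matrix ι ι ℝ} (hM : M.PosSemidef)
    {t : ℝ} (ht : 0 ≤ t) : (t • M).PosSemidef := by
  refine Matrix.PosSemidef.of_dotProduct_mulVec_nonneg ?_ fun x => ?_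
  · unfold Matrix.IsHermitian
    rw [conjTranspose_smul, hM.1]; simp
  · rw [smul_mulVec, dotProduct_smul, smul_eq_mul]
    exact mul_nonneg ht (hM.dotProduct_mulVec_nonneg x)

lemma PosDef.smul' {ι : Type} [Fintype ι] {M : Matrix ι ι ℝ} (hM : M.PosDef)
    {t : ℝ} (ht : 0 < t) : (t • M).PosDef := by
  refine Matrix.PosDef.of_dotProduct_mulVec_pos ?_ fun x hx => ?_
  · unfold Matrix.IsHermitian
    rw [conjTranspose_smul, hM.1]; simp
  · rw [smul_mulVec, dotProduct_smul, smul_eq_mul]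
    exact mul_pos ht (hM.dotProduct_mulVec_pos hx)

lemma smul_one_sub_posSemidef {ι : Type} [Fintype ι] [DecidableEq ι]
    {B : Matrix ι ι ℝ} (hB : B.IsHermitian) :
    ∃ t : ℝ, 1 ≤ t ∧ (t • (1 : Matrix ι ι ℝ) - B).PosSemidef := by
  set μ := hB.eigenvalues with hμ
  refine ⟨1 + ∑ i, |μ i|, le_add_of_nonneg_right (Finset.sum_nonneg fun i _ => abs_nonneg _), ?_⟩
  set t : ℝ := 1 + ∑ i, |μ i| with ht
  set U := (hB.eigenvectorUnitary : Matrix ι ι ℝ) with hU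
  have hUU : U * star U = 1 := (Unitary.mem_iff.mp hB.eigenvectorUnitary.2).2
  have key : t • (1 : Matrix ι ι ℝ) - B = U * diagonal (fun i => t - μ i) * star U := by
    have hd : diagonal (fun i => t - μ i)
        = t • (1 : Matrix ι ι ℝ) - diagonal ((RCLike.ofReal : ℝ → ℝ) ∘ μ) := by
      ext i j
      by_cases h : i = j <;> simp [diagonal_apply, h, one_apply]
    have hspec : B = U * diagonal (RCLike.ofReal ∘ μ) * star U := hB.spectral_theorem
    rw [hd, Matrix.mul_sub, Matrix.sub_mul, ← hspec]
    rw [Matrix.mul_smul, Matrix.mul_one, Matrix.smul_mul, hUU]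
  rw [key, star_eq_conjTranspose]
  exact (posSemidef_diagonal_iff.mpr fun i => by
    have h1 : μ i ≤ ∑ j, |μ j| :=
      le_trans (le_abs_self _)
        (Finset.single_le_sum (fun j _ => abs_nonneg (μ j)) (Finset.mem_univ i))
    simp only [sub_nonneg, ht]; linarith).mul_mul_conjTranspose_same U

lemma exists_smul_sub_posSemidef {ι : Type} [Fintype ι] [DecidableEq ι]
    {V V₀ : Matrix ι ι ℝ} (hV : V.PosDef) (hV₀ : V₀.IsHermitian) :
    ∃ t : ℝ, 1 ≤ t ∧ (t • V - V₀).PosSemidef := by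
  set P := CFC.sqrt V with hPdef
  have hP : P.PosSemidef := Matrix.nonneg_iff_posSemidef.mp (CFC.sqrt_nonneg V)
  have hPP : P * P = V := CFC.sqrt_mul_sqrt_self V (Matrix.nonneg_iff_posSemidef.mpr hV.posSemidef)
  have hPdet : IsUnit P.det := by
    have h2 : P.det * P.det = V.det := by rw [← det_mul, hPP]
    have := hV.det_pos
    refine isUnit_iff_ne_zero.mpr fun h => ?_
    rw [h, mul_zero] at h2; linarith [h2 ▸ this]
  set B := P⁻¹ * V₀ * P⁻¹ with hBdef
  have hB : B.IsHermitian := by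
    have h := isHermitian_conjTranspose_mul_mul (P⁻¹) hV₀
    rwa [hP.1.inv] at h
  obtain ⟨t, ht1, hpsd⟩ := smul_one_sub_posSemidef hB
  refine ⟨t, ht1, ?_⟩
  have h2 : P * B * P = V₀ := by
    rw [hBdef, ← Matrix.mul_assoc, ← Matrix.mul_assoc, Matrix.mul_nonsing_inv _ hPdet,
      Matrix.one_mul, Matrix.mul_assoc, Matrix.nonsing_inv_mul _ hPdet, Matrix.mul_one]
  have key : t • V - V₀ = P * (t • (1 : Matrix ι ι ℝ) - B) * Pᴴ := by
    rw [hP.1, Matrix.mul_sub, Matrix.sub_mul, Matrix.mul_smul, Matrix.mul_one, Matrix.smul_mul,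
      hPP, h2]
  exact key ▸ hpsd.mul_mul_conjTranspose_same P

variable {α β : Type} [Fintype α] [Fintype β] [DecidableEq α] [DecidableEq β]

lemma herm_toBlocks₂₁ {M : Matrix (α ⊕ β) (α ⊕ β) ℝ} (hM : M.IsHermitian) :
    M.toBlocks₂₁ = (M.toBlocks₁₂)ᴴ := by
  ext i j
  have h := congrFun (congrFun hM.eq (Sum.inr i)) (Sum.inl j)
  simpa [conjTranspose_apply, toBlocks₂₁, toBlocks₁₂] using h.symm

lemma herm_toBlocks₁₁ {M : Matrix (α ⊕ β) (α ⊕ β) ℝ} (hM : M.IsHermitian) :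
    M.toBlocks₁₁.IsHermitian := by
  ext i j
  have h := congrFun (congrFun hM.eq (Sum.inl i)) (Sum.inl j)
  simpa [conjTranspose_apply, toBlocks₁₁] using h

lemma herm_toBlocks₂₂ {M : Matrix (α ⊕ β) (α ⊕ β) ℝ} (hM : M.IsHermitian) :
    M.toBlocks₂₂.IsHermitian := by
  ext i j
  have h := congrFun (congrFun hM.eq (Sum.inr i)) (Sum.inr j)
  simpa [conjTranspose_apply, toBlocks₂₂] using h

lemma herm_blocks {M : Matrix (α ⊕ β) (α ⊕ β) ℝ} (hM : M.IsHermitian) :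
    M = fromBlocks M.toBlocks₁₁ M.toBlocks₁₂ (M.toBlocks₁₂)ᴴ M.toBlocks₂₂ := by
  conv_lhs => rw [← fromBlocks_toBlocks M]
  rw [herm_toBlocks₂₁ hM]

lemma schurR_isHermitian {M : Matrix (α ⊕ β) (α ⊕ β) ℝ} (hM : M.IsHermitian) :
    (schurR M).IsHermitian := by
  unfold schurR
  rw [herm_toBlocks₂₁ hM]
  exact (herm_toBlocks₂₂ hM).sub (isHermitian_conjTranspose_mul_mul _ (herm_toBlocks₁₁ hM).inv)

lemma schurR_smul (M : Matrix (α ⊕ β) (α ⊕ β) ℝ) {t : ℝ} (ht : t ≠ 0)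
    (hdet : IsUnit M.toBlocks₁₁.det) : schurR (t • M) = t • schurR M := by
  unfold schurR
  have h11 : (t • M).toBlocks₁₁ = t • M.toBlocks₁₁ := rfl
  have h12 : (t • M).toBlocks₁₂ = t • M.toBlocks₁₂ := rfl
  have h21 : (t • M).toBlocks₂₁ = t • M.toBlocks₂₁ := rfl
  have h22 : (t • M).toBlocks₂₂ = t • M.toBlocks₂₂ := rfl
  letI := invertibleOfNonzero ht
  have hi := Matrix.inv_smul (A := M.toBlocks₁₁) t hdet
  rw [invOf_eq_inv t] at hi
  rw [h11, h12, h21, h22, hi, smul_sub]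
  congr 1
  simp only [Matrix.smul_mul, Matrix.mul_smul, smul_smul]
  congr 1
  field_simp

lemma schurR_mono {M N : Matrix (α ⊕ β) (α ⊕ β) ℝ} (hM : M.IsHermitian)
    (hMA : M.toBlocks₁₁.PosDef) (hN : N.PosSemidef) (hNA : N.toBlocks₁₁.PosDef)
    (hMN : (M - N).PosSemidef) : (schurR M - schurR N).PosSemidef := by
  refine Matrix.PosSemidef.of_dotProduct_mulVec_nonneg ((schurR_isHermitian hM).sub (schurR_isHermitian hN.1)) fun y => ?_
  letI : Invertible M.toBlocks₁₁ :=
    Matrix.invertibleOfIsUnitDet _ (isUnit_iff_ne_zero.mpr hMA.det_pos.ne')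
  letI : Invertible N.toBlocks₁₁ :=
    Matrix.invertibleOfIsUnitDet _ (isUnit_iff_ne_zero.mpr hNA.det_pos.ne')
  set x : α → ℝ := -(((M.toBlocks₁₁)⁻¹ * M.toBlocks₁₂) *ᵥ y) with hx
  have hMeq := schur_complement_eq₁₁ (A := M.toBlocks₁₁) M.toBlocks₁₂ M.toBlocks₂₂ x y
    (herm_toBlocks₁₁ hM)
  have hNeq := schur_complement_eq₁₁ (A := N.toBlocks₁₁) N.toBlocks₁₂ N.toBlocks₂₂ x y
    (herm_toBlocks₁₁ hN.1)
  rw [← herm_blocks hM] at hMeq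
  rw [← herm_blocks hN.1] at hNeq
  have hxz : x + ((M.toBlocks₁₁)⁻¹ * M.toBlocks₁₂) *ᵥ y = 0 := by
    rw [hx]; exact neg_add_cancel _
  rw [hxz] at hMeq
  simp only [star_zero, Matrix.zero_vecMul, zero_dotProduct, vecMul_zero, zero_add] at hMeq
  have hSM : M.toBlocks₂₂ - (M.toBlocks₁₂)ᴴ * (M.toBlocks₁₁)⁻¹ * M.toBlocks₁₂ = schurR M := by
    rw [schurR, herm_toBlocks₂₁ hM]
  have hSN : N.toBlocks₂₂ - (N.toBlocks₁₂)ᴴ * (N.toBlocks₁₁)⁻¹ * N.toBlocks₁₂ = schurR N := by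
    rw [schurR, herm_toBlocks₂₁ hN.1]
  rw [hSM] at hMeq
  rw [hSN] at hNeq
  have hMN' : star (x ⊕ᵥ y) ᵥ* N ⬝ᵥ (x ⊕ᵥ y) ≤ star (x ⊕ᵥ y) ᵥ* M ⬝ᵥ (x ⊕ᵥ y) := by
    have h0 := hMN.dotProduct_mulVec_nonneg (x ⊕ᵥ y)
    rw [Matrix.sub_mulVec, dotProduct_sub, dotProduct_mulVec, dotProduct_mulVec] at h0
    linarith
  have hfirst : 0 ≤ star (x + ((N.toBlocks₁₁)⁻¹ * N.toBlocks₁₂) *ᵥ y) ᵥ* N.toBlocks₁₁ ⬝ᵥ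
      (x + ((N.toBlocks₁₁)⁻¹ * N.toBlocks₁₂) *ᵥ y) := by
    rw [← dotProduct_mulVec]
    exact hNA.posSemidef.dotProduct_mulVec_nonneg _
  have goal' : star y ᵥ* (schurR N) ⬝ᵥ y ≤ star y ᵥ* (schurR M) ⬝ᵥ y := by
    rw [← hMeq]
    calc star y ᵥ* (schurR N) ⬝ᵥ y ≤ star (x ⊕ᵥ y) ᵥ* N ⬝ᵥ (x ⊕ᵥ y) := by rw [hNeq]; linarith
    _ ≤ _ := hMN'
  have hfin : star y ⬝ᵥ (schurR M - schurR N) *ᵥ y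
      = star y ᵥ* (schurR M) ⬝ᵥ y - star y ᵥ* (schurR N) ⬝ᵥ y := by
    rw [Matrix.sub_mulVec, dotProduct_sub, dotProduct_mulVec, dotProduct_mulVec]
  rw [hfin]
  linarith

lemma posDef_conj {n : Type} [Fintype n] [DecidableEq n] {V S : Matrix n n ℝ}
    (hV : V.PosDef) (hS : Sᴴ = S) (hSS : S * S = 1) : (S * V * S).PosDef := by
  refine Matrix.PosDef.of_dotProduct_mulVec_pos ?_ fun x hx => ?_
  · show _ᴴ = _
    rw [conjTranspose_mul, conjTranspose_mul, hS, hV.1.eq, ← Matrix.mul_assoc]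
  · have hx' : S *ᵥ x ≠ 0 := by
      intro h
      apply hx
      have h2 := congrArg (S *ᵥ ·) h
      simpa [Matrix.mulVec_mulVec, hSS, Matrix.one_mulVec] using h2
    rw [show S * V * S = Sᴴ * V * S by rw [hS]]
    simpa only [star_mulVec, dotProduct_mulVec, vecMul_vecMul] using hV.dotProduct_mulVec_pos hx'

lemma fromBlocks_zero_posSemidef {W : Matrix α α ℝ} (hW : W.PosSemidef) :
    (fromBlocks W 0 0 (0 : Matrix β β ℝ)).PosSemidef := by
  refine Matrix.PosSemidef.of_dotProduct_mulVec_nonneg ?_ fun x => ?_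
  · show _ᴴ = _
    rw [fromBlocks_conjTranspose, hW.1.eq]
    simp
  · rw [← Sum.elim_comp_inl_inr x]
    simp only [fromBlocks_mulVec, Matrix.zero_mulVec, add_zero, zero_add,
      Function.star_sumElim, sumElim_dotProduct_sumElim]
    simpa using hW.dotProduct_mulVec_nonneg (x ∘ Sum.inl)

lemma SgM_herm (n : ℕ) : (SgM n)ᴴ = SgM n := by
  rw [SgM, fromBlocks_conjTranspose]
  simp

lemma SgM_sq (n : ℕ) : SgM n * SgM n = 1 := by
  rw [SgM, fromBlocks_multiply, ← fromBlocks_one]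
  congr 1 <;> simp

end Helpers

/-- Monotonicity of `κ` under Gaussian channels which send the free set `𝒱_A`
into the free set `𝒱_B` and whose Choi covariance matrix is `Γ ⪰ 0`. -/
theorem stmt15 (nA nB : ℕ)
    (𝒱A : Set (Matrix (Fin nA ⊕ Fin nA) (Fin nA ⊕ Fin nA) ℝ))
    (𝒱B : Set (Matrix (Fin nB ⊕ Fin nB) (Fin nB ⊕ Fin nB) ℝ))
    (hA : FreeSet 𝒱A) (hB : FreeSet 𝒱B)
    (Γ : Matrix ((Fin nA ⊕ Fin nA) ⊕ (Fin nB ⊕ Fin nB))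
      ((Fin nA ⊕ Fin nA) ⊕ (Fin nB ⊕ Fin nB)) ℝ)
    (hΓsymm : Γ.IsSymm) (hΓpsd : Γ.PosSemidef)
    (hinv : ∀ V : Matrix (Fin nA ⊕ Fin nA) (Fin nA ⊕ Fin nA) ℝ,
      V.PosDef → IsUnit (Γ.toBlocks₁₁ + SgM nA * V * SgM nA).det)
    (hmap : ∀ V ∈ 𝒱A, chan nA nB Γ V ∈ 𝒱B) :
    ∀ V : Matrix (Fin nA ⊕ Fin nA) (Fin nA ⊕ Fin nA) ℝ,
      V.IsSymm → V.PosDef → kappa 𝒱B (chan nA nB Γ V) ≤ kappa 𝒱A V := by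
  intro V hVs hVd
  have hVh : V.IsHermitian := (isHermitian_iff_isSymm' V).mpr hVs
  have hW : (SgM nA * V * SgM nA).PosDef := posDef_conj hVd (SgM_herm nA) (SgM_sq nA)
  set W := SgM nA * V * SgM nA with hWdef
  have hΓ11 : Γ.toBlocks₁₁.PosSemidef := hΓpsd.submatrix Sum.inl
  -- the key subset inclusion
  have hsub : {t : ℝ | 1 ≤ t ∧ t • V ∈ 𝒱A}
      ⊆ {t : ℝ | 1 ≤ t ∧ t • chan nA nB Γ V ∈ 𝒱B} := by
    rintro t ⟨ht1, htV⟩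
    have ht0 : (0 : ℝ) < t := lt_of_lt_of_le one_pos ht1
    refine ⟨ht1, ?_⟩
    have hmem := hmap _ htV
    set M : Matrix ((Fin nA ⊕ Fin nA) ⊕ (Fin nB ⊕ Fin nB))
        ((Fin nA ⊕ Fin nA) ⊕ (Fin nB ⊕ Fin nB)) ℝ := Γ + fromBlocks W 0 0 0 with hM
    have hFpsd : (fromBlocks W 0 0
        (0 : Matrix (Fin nB ⊕ Fin nB) (Fin nB ⊕ Fin nB) ℝ)).PosSemidef :=
      fromBlocks_zero_posSemidef hW.posSemidef
    have hMherm : M.IsHermitian := hΓpsd.1.add hFpsd.1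
    have hM11 : M.toBlocks₁₁ = Γ.toBlocks₁₁ + W := by
      have h : M.toBlocks₁₁ = Γ.toBlocks₁₁ + (fromBlocks W 0 0
          (0 : Matrix (Fin nB ⊕ Fin nB) (Fin nB ⊕ Fin nB) ℝ)).toBlocks₁₁ := rfl
      rw [h, toBlocks_fromBlocks₁₁]
    have hM11pd : M.toBlocks₁₁.PosDef := by
      rw [hM11]; exact Matrix.PosDef.posSemidef_add hΓ11 hW
    have hchanV : chan nA nB Γ V = schurR M := rfl
    have hscaled : SgM nA * (t • V) * SgM nA = t • W := by
      rw [hWdef]; simp [Matrix.mul_smul, Matrix.smul_mul]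
    set N : Matrix ((Fin nA ⊕ Fin nA) ⊕ (Fin nB ⊕ Fin nB))
        ((Fin nA ⊕ Fin nA) ⊕ (Fin nB ⊕ Fin nB)) ℝ := Γ + fromBlocks (t • W) 0 0 0 with hN
    have hchantV : chan nA nB Γ (t • V) = schurR N := by
      rw [chan, hscaled, hN]
    have hdet : IsUnit M.toBlocks₁₁.det := isUnit_iff_ne_zero.mpr hM11pd.det_pos.ne'
    have hhom : t • chan nA nB Γ V = schurR (t • M) := by
      rw [hchanV, schurR_smul M ht0.ne' hdet]
    have htM : t • M = t • Γ + fromBlocks (t • W) 0 0 0 := by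
      rw [hM, smul_add]
      congr 1
      rw [Matrix.fromBlocks_smul]
      simp
    have htMherm : (t • M).IsHermitian := by
      unfold Matrix.IsHermitian
      rw [conjTranspose_smul, hMherm.eq]; simp
    have hmono : (schurR (t • M) - schurR N).PosSemidef := by
      apply schurR_mono htMherm
      · have h : (t • M).toBlocks₁₁ = t • M.toBlocks₁₁ := rfl
        rw [h]; exact PosDef.smul' hM11pd ht0
      · rw [hN]
        exact hΓpsd.add (fromBlocks_zero_posSemidef (PosSemidef.smul' hW.posSemidef ht0.le))
      · have h : N.toBlocks₁₁ = Γ.toBlocks₁₁ + t • W := by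
          have h2 : N.toBlocks₁₁ = Γ.toBlocks₁₁ + (fromBlocks (t • W) 0 0
              (0 : Matrix (Fin nB ⊕ Fin nB) (Fin nB ⊕ Fin nB) ℝ)).toBlocks₁₁ := rfl
          rw [h2, toBlocks_fromBlocks₁₁]
        rw [h]
        exact Matrix.PosDef.posSemidef_add hΓ11 (PosDef.smul' hW ht0)
      · have h : t • M - N = (t - 1) • Γ := by
          rw [htM, hN]; module
        rw [h]
        exact PosSemidef.smul' hΓpsd (by linarith)
    have hsymm : (t • chan nA nB Γ V).IsSymm := by
      rw [← isHermitian_iff_isSymm', hhom]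
      exact schurR_isHermitian htMherm
    have hdiff : (t • chan nA nB Γ V - chan nA nB Γ (t • V)).PosSemidef := by
      rw [hhom, hchantV]; exact hmono
    exact hB.2.2.2 _ hmem _ hsymm hdiff
  -- the source set is nonempty
  obtain ⟨V₀, hV₀⟩ := hA.1
  obtain ⟨t, ht1, hts⟩ := exists_smul_sub_posSemidef hVd
    ((isHermitian_iff_isSymm' V₀).mpr (hA.2.2.1 _ hV₀).1)
  have htVsymm : (t • V).IsSymm := by
    unfold Matrix.IsSymm
    rw [transpose_smul, hVs]
  have hne : ({t : ℝ | 1 ≤ t ∧ t • V ∈ 𝒱A}).Nonempty :=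
    ⟨t, ht1, hA.2.2.2 V₀ hV₀ (t • V) htVsymm hts⟩
  exact csInf_le_csInf ⟨1, fun x hx => hx.1⟩ hne hsub
end
end
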